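/- arXiv:2305.00511 — 4 statements merged into one kernel-verified Lean document; each statement's English description precedes it below -/
import Mathlib

section
/- Let (X, d, ≽) be a radial partially ordered metric space, K > 0, S a nonempty subset of X, and f : S → ℝ a ≽-increasing K-Lipschitz function. Then among all ≽-increasing K-Lipschitz functions F : X → ℝ extending f there is a smallest one, i.e., there exists such an extension F₀ with F₀ ≤ F pointwise for every ≽-increasing K-Lipschitz extension F of f; likewise there is a largest such extension. -/
/-!
Every `≽`-increasing `K`-Lipschitz extension `F` of `f` satisfies, for `s ∈ S` and `x ≽ z`,
`F x ≥ F z ≥ f s - K * dist z s`. The supremum of these forced lower bounds is itself an admissible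
extension, hence the smallest one: radiality supplies exactly the inequality
`dist y s ≤ dist x y + dist z s` (for `x ≽ z` and `y ⋡ s`) that makes this supremum finite,
`K`-Lipschitz and equal to `f` on `S`. The largest extension is the smallest one for the reversed
order and `-f`, negated.
-/

section

variable {X : Type*} [MetricSpace X]

/-- Conditions (i) and (ii) of radiality, with `r x y` for `x ≽ y` (so `x ≽• y` is `¬ r y x`). -/
def IsRadial (r : X → X → Prop) : Prop :=
  (∀ x y z, ¬ r y x → r y z ∧ y ≠ z → dist x y ≤ dist x z) ∧
    ∀ x y z, r x y ∧ x ≠ y → ¬ r z y → dist y z ≤ dist x z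

def IsMonotoneLipschitzExtension (r : X → X → Prop) (K : ℝ) (S : Set X) (f F : X → ℝ) : Prop :=
  (∀ x y, r x y → F y ≤ F x) ∧ (∀ x y, |F x - F y| ≤ K * dist x y) ∧ ∀ x ∈ S, F x = f x

variable {r : X → X → Prop} {K : ℝ} {S : Set X} {f : X → ℝ}

theorem IsRadial.flip (hr : IsRadial r) : IsRadial (flip r) := by
  refine ⟨fun x y z hyx hyz => ?_, fun x y z hxy hzy => ?_⟩
  · simpa only [dist_comm] using hr.2 z y x ⟨hyz.1, hyz.2.symm⟩ hyx
  · simpa only [dist_comm] using hr.1 z y x hzy ⟨hxy.1, hxy.2.symm⟩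

theorem IsRadial.dist_le_dist_add_dist (hr : IsRadial r) {x y z s : X} (hxz : r x z)
    (hys : ¬ r y s) : dist y s ≤ dist x y + dist z s := by
  by_cases hxs : r x s
  · have hsy : dist s y ≤ dist x y := by
      rcases eq_or_ne x s with rfl | hne
      · exact le_rfl
      · exact hr.2 x s y ⟨hxs, hne⟩ hys
    linarith [dist_comm s y, dist_nonneg (x := z) (y := s)]
  · have hsx : dist s x ≤ dist s z := by
      rcases eq_or_ne x z with rfl | hne
      · exact le_rfl
      · exact hr.1 s x z hxs ⟨hxz, hne⟩
    linarith [dist_triangle y x s, dist_comm y x, dist_comm x s, dist_comm z s]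

theorem isMonotoneLipschitzExtension_flip_neg {F : X → ℝ} :
    IsMonotoneLipschitzExtension (flip r) K S (-f) (-F) ↔
      IsMonotoneLipschitzExtension r K S f F := by
  refine and_congr ⟨fun h x y hxy => neg_le_neg_iff.1 (h y x hxy),
    fun h x y hxy => neg_le_neg (h y x hxy)⟩ (and_congr ?_ ?_)
  · simp only [Pi.neg_apply, neg_sub_neg]
    exact ⟨fun h x y => by simpa only [dist_comm] using h y x,
      fun h x y => by simpa only [dist_comm] using h y x⟩
  · simp only [Pi.neg_apply, neg_inj]

def lowerCandidates (r : X → X → Prop) (K : ℝ) (S : Set X) (f : X → ℝ) (x : X) : Set ℝ :=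
  {v | ∃ s ∈ S, ∃ z, r x z ∧ v = f s - K * dist z s}

theorem lowerCandidates_subset (htrans : ∀ x y z, r x y → r y z → r x z) {x y : X}
    (hxy : r x y) : lowerCandidates r K S f y ⊆ lowerCandidates r K S f x := by
  rintro v ⟨s, hs, z, hyz, rfl⟩
  exact ⟨s, hs, z, htrans x y z hxy hyz, rfl⟩

theorem mem_lowerCandidates_self (hrefl : ∀ x, r x x) {s : X} (hs : s ∈ S) :
    f s ∈ lowerCandidates r K S f s :=
  ⟨s, hs, s, hrefl s, by simp⟩

theorem exists_mem_lowerCandidates_sub_le (hrefl : ∀ x, r x x) (hr : IsRadial r) (hK : 0 ≤ K)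
    {x : X} {v : ℝ} (hv : v ∈ lowerCandidates r K S f x) (y : X) :
    ∃ w ∈ lowerCandidates r K S f y, v - K * dist x y ≤ w := by
  obtain ⟨s, hs, z, hxz, rfl⟩ := hv
  by_cases hys : r y s
  · refine ⟨f s, ⟨s, hs, s, hys, by simp⟩, ?_⟩
    linarith [mul_nonneg hK (dist_nonneg (x := z) (y := s)),
      mul_nonneg hK (dist_nonneg (x := x) (y := y))]
  · refine ⟨f s - K * dist y s, ⟨s, hs, y, hrefl y, rfl⟩, ?_⟩
    have hdist := mul_le_mul_of_nonneg_left (hr.dist_le_dist_add_dist hxz hys) hK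
    rw [mul_add] at hdist
    linarith

theorem le_of_mem_lowerCandidates (hr : IsRadial r) (hK : 0 ≤ K)
    (hmono : ∀ x ∈ S, ∀ y ∈ S, r x y → f y ≤ f x)
    (hlip : ∀ x ∈ S, ∀ y ∈ S, |f x - f y| ≤ K * dist x y) {t : X} {v : ℝ} (ht : t ∈ S)
    (hv : v ∈ lowerCandidates r K S f t) : v ≤ f t := by
  obtain ⟨s, hs, z, htz, rfl⟩ := hv
  by_cases hts : r t s
  · linarith [hmono t ht s hs hts, mul_nonneg hK (dist_nonneg (x := z) (y := s))]
  · have hdist := mul_le_mul_of_nonneg_left (hr.dist_le_dist_add_dist htz hts) hK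
    rw [dist_self, zero_add, dist_comm] at hdist
    linarith [(abs_le.mp (hlip s hs t ht)).2]

theorem IsMonotoneLipschitzExtension.le_of_mem_lowerCandidates {F : X → ℝ}
    (hF : IsMonotoneLipschitzExtension r K S f F) {x : X} {v : ℝ}
    (hv : v ∈ lowerCandidates r K S f x) : v ≤ F x := by
  obtain ⟨s, hs, z, hxz, rfl⟩ := hv
  have hlip := (abs_le.mp (hF.2.1 z s)).1
  rw [hF.2.2 s hs] at hlip
  linarith [hF.1 x z hxz]

noncomputable def lowerExtension (r : X → X → Prop) (K : ℝ) (S : Set X) (f : X → ℝ) (x : X) : ℝ :=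
  sSup (lowerCandidates r K S f x)

theorem isLeast_lowerExtension (hrefl : ∀ x, r x x) (htrans : ∀ x y z, r x y → r y z → r x z)
    (hr : IsRadial r) (hK : 0 ≤ K) (hS : S.Nonempty)
    (hmono : ∀ x ∈ S, ∀ y ∈ S, r x y → f y ≤ f x)
    (hlip : ∀ x ∈ S, ∀ y ∈ S, |f x - f y| ≤ K * dist x y) :
    IsLeast {F | IsMonotoneLipschitzExtension r K S f F} (lowerExtension r K S f) := by
  obtain ⟨s₀, hs₀⟩ := hS
  have hne (x : X) : (lowerCandidates r K S f x).Nonempty := by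
    obtain ⟨w, hw, -⟩ :=
      exists_mem_lowerCandidates_sub_le hrefl hr hK (mem_lowerCandidates_self hrefl hs₀) x
    exact ⟨w, hw⟩
  have hbdd (x : X) : BddAbove (lowerCandidates r K S f x) := by
    refine ⟨f s₀ + K * dist x s₀, fun v hv => ?_⟩
    obtain ⟨w, hw, hvw⟩ := exists_mem_lowerCandidates_sub_le hrefl hr hK hv s₀
    linarith [le_of_mem_lowerCandidates hr hK hmono hlip hs₀ hw]
  have hle_add (x y : X) : lowerExtension r K S f x ≤ lowerExtension r K S f y + K * dist x y := by
    refine csSup_le (hne x) fun v hv => ?_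
    obtain ⟨w, hw, hvw⟩ := exists_mem_lowerCandidates_sub_le hrefl hr hK hv y
    have hw_le : w ≤ lowerExtension r K S f y := le_csSup (hbdd y) hw
    linarith
  refine ⟨⟨fun x y hxy => ?_, fun x y => ?_, fun x hx => ?_⟩, fun F hF x => ?_⟩
  · exact csSup_le_csSup (hbdd x) (hne y) (lowerCandidates_subset htrans hxy)
  · have hyx := hle_add y x
    rw [dist_comm] at hyx
    exact abs_sub_le_iff.2 ⟨by linarith [hle_add x y], by linarith⟩
  · refine le_antisymm (csSup_le (hne x) fun v hv => ?_) ?_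
    · exact le_of_mem_lowerCandidates hr hK hmono hlip hx hv
    · exact le_csSup (hbdd x) (mem_lowerCandidates_self hrefl hx)
  · exact csSup_le (hne x) fun v hv => hF.le_of_mem_lowerCandidates hv

theorem exists_isGreatest_monotoneLipschitzExtension (hrefl : ∀ x, r x x)
    (htrans : ∀ x y z, r x y → r y z → r x z) (hr : IsRadial r) (hK : 0 ≤ K) (hS : S.Nonempty)
    (hmono : ∀ x ∈ S, ∀ y ∈ S, r x y → f y ≤ f x)
    (hlip : ∀ x ∈ S, ∀ y ∈ S, |f x - f y| ≤ K * dist x y) :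
    ∃ F₁, IsGreatest {F | IsMonotoneLipschitzExtension r K S f F} F₁ := by
  have hdual := isLeast_lowerExtension (r := flip r) (K := K) (f := -f) hrefl
    (fun x y z hxy hyz => htrans z y x hyz hxy) hr.flip hK hS
    (fun x hx y hy h => neg_le_neg (hmono y hy x hx h))
    (fun x hx y hy => by
      simpa only [Pi.neg_apply, neg_sub_neg, abs_sub_comm] using hlip x hx y hy)
  refine ⟨-lowerExtension (flip r) K S (-f), ?_, fun F hF => ?_⟩
  · exact isMonotoneLipschitzExtension_flip_neg.1 (by rw [neg_neg]; exact hdual.1)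
  · exact le_neg.1 (hdual.2 (isMonotoneLipschitzExtension_flip_neg.2 hF))

end

theorem exists_smallest_and_largest_monotone_lipschitz_extension_general
    {X : Type*} [MetricSpace X] (r : X → X → Prop)
    (hrefl : ∀ x, r x x)
    (htrans : ∀ x y z, r x y → r y z → r x z)
    (hrad1 : ∀ x y z, ¬ r y x → r y z ∧ y ≠ z → dist x y ≤ dist x z)
    (hrad2 : ∀ x y z, r x y ∧ x ≠ y → ¬ r z y → dist y z ≤ dist x z)
    (K : ℝ) (hK : 0 < K) (S : Set X) (hS : S.Nonempty) (f : X → ℝ)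
    (hmono : ∀ x ∈ S, ∀ y ∈ S, r x y → f y ≤ f x)
    (hlip : ∀ x ∈ S, ∀ y ∈ S, |f x - f y| ≤ K * dist x y) :
    (∃ F₀ : X → ℝ,
      ((∀ x y, r x y → F₀ y ≤ F₀ x) ∧ (∀ x y, |F₀ x - F₀ y| ≤ K * dist x y) ∧
        ∀ x ∈ S, F₀ x = f x) ∧
      ∀ F : X → ℝ, (∀ x y, r x y → F y ≤ F x) →
        (∀ x y, |F x - F y| ≤ K * dist x y) → (∀ x ∈ S, F x = f x) →
        ∀ x, F₀ x ≤ F x) ∧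
    (∃ F₁ : X → ℝ,
      ((∀ x y, r x y → F₁ y ≤ F₁ x) ∧ (∀ x y, |F₁ x - F₁ y| ≤ K * dist x y) ∧
        ∀ x ∈ S, F₁ x = f x) ∧
      ∀ F : X → ℝ, (∀ x y, r x y → F y ≤ F x) →
        (∀ x y, |F x - F y| ≤ K * dist x y) → (∀ x ∈ S, F x = f x) →
        ∀ x, F x ≤ F₁ x) := by
  have hr : IsRadial r := ⟨hrad1, hrad2⟩
  obtain ⟨hF₀, hF₀_le⟩ := isLeast_lowerExtension hrefl htrans hr hK.le hS hmono hlip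
  obtain ⟨F₁, hF₁, hF₁_ge⟩ :=
    exists_isGreatest_monotoneLipschitzExtension hrefl htrans hr hK.le hS hmono hlip
  exact ⟨⟨_, hF₀, fun F h₁ h₂ h₃ => hF₀_le ⟨h₁, h₂, h₃⟩⟩,
    ⟨F₁, hF₁, fun F h₁ h₂ h₃ => hF₁_ge ⟨h₁, h₂, h₃⟩⟩⟩

/-- **Remark 3.** In a radial partially ordered metric space, among all
`≽`-increasing `K`-Lipschitz extensions of an `≽`-increasing `K`-Lipschitz
`f : S → ℝ` there exist a (pointwise) smallest one and a largest one.
Here `r x y` means `x ≽ y`. -/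
theorem exists_smallest_and_largest_monotone_lipschitz_extension
    {X : Type*} [MetricSpace X] (r : X → X → Prop)
    (hrefl : ∀ x, r x x)
    (htrans : ∀ x y z, r x y → r y z → r x z)
    (hantisymm : ∀ x y, r x y → r y x → x = y)
    (hrad1 : ∀ x y z, ¬ r y x → r y z ∧ y ≠ z → dist x y ≤ dist x z)
    (hrad2 : ∀ x y z, r x y ∧ x ≠ y → ¬ r z y → dist y z ≤ dist x z)
    (K : ℝ) (hK : 0 < K) (S : Set X) (hS : S.Nonempty) (f : X → ℝ)
    (hmono : ∀ x ∈ S, ∀ y ∈ S, r x y → f y ≤ f x)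
    (hlip : ∀ x ∈ S, ∀ y ∈ S, |f x - f y| ≤ K * dist x y) :
    (∃ F₀ : X → ℝ,
      ((∀ x y, r x y → F₀ y ≤ F₀ x) ∧ (∀ x y, |F₀ x - F₀ y| ≤ K * dist x y) ∧
        ∀ x ∈ S, F₀ x = f x) ∧
      ∀ F : X → ℝ, (∀ x y, r x y → F y ≤ F x) →
        (∀ x y, |F x - F y| ≤ K * dist x y) → (∀ x ∈ S, F x = f x) →
        ∀ x, F₀ x ≤ F x) ∧
    (∃ F₁ : X → ℝ,
      ((∀ x y, r x y → F₁ y ≤ F₁ x) ∧ (∀ x y, |F₁ x - F₁ y| ≤ K * dist x y) ∧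
        ∀ x ∈ S, F₁ x = f x) ∧
      ∀ F : X → ℝ, (∀ x y, r x y → F y ≤ F x) →
        (∀ x y, |F x - F y| ≤ K * dist x y) → (∀ x ∈ S, F x = f x) →
        ∀ x, F x ≤ F₁ x) :=
  exists_smallest_and_largest_monotone_lipschitz_extension_general r hrefl htrans hrad1 hrad2 K hK S
    hS f hmono hlip
end

section
/- Let (X, d, ≽) be a radial partially ordered metric space such that (X,d) is σ-compact. Then there exists a Lipschitz function F : X → ℝ such that F(x) > F(y) for every x,y ∈ X with x ≻ y. -/
/-!
For a point `a`, the distance to the lower set `{z | a ≽ z}` is `1`-Lipschitz, and radiality makes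
it weakly increasing. If `x ≻ y` and `a` is close enough to `y`, radiality also shows that this
distance is almost `0` at `y` but at least about `dist x y` at `x`. Taking `a` along a dense
sequence (σ-compact metric spaces are separable), the sum `∑ 2⁻ⁿ min (infDist x {z | aₙ ≽ z}) 1`
is therefore Lipschitz and strictly increasing.
-/

open Metric

section Radial

variable {X : Type*} [MetricSpace X] {r : X → X → Prop}

theorem infDist_le_infDist_of_rel {s : Set X} (hs : ∀ z ∈ s, ∀ y, r z y → y ∈ s)
    (hrad2 : ∀ x y z, r x y ∧ x ≠ y → ¬ r z y → dist y z ≤ dist x z)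
    {x y : X} (hxy : r x y ∧ x ≠ y) : infDist y s ≤ infDist x s := by
  rcases s.eq_empty_or_nonempty with rfl | hne
  · simp
  refine (le_infDist hne).2 fun z hz => ?_
  by_cases hzy : r z y
  · rw [infDist_zero_of_mem (hs z hz y hzy)]
    exact dist_nonneg
  · exact (infDist_le_dist_of_mem hz).trans (hrad2 x y z hxy hzy)

theorem dist_le_infDist_of_dist_lt (hrefl : ∀ x, r x x)
    (hrad1 : ∀ x y z, ¬ r y x → r y z ∧ y ≠ z → dist x y ≤ dist x z)
    (hrad2 : ∀ x y z, r x y ∧ x ≠ y → ¬ r z y → dist y z ≤ dist x z)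
    {a x y : X} (hyx : ¬ r y x) (ha : dist a y < dist x y) :
    dist x a ≤ infDist x {z | r a z} := by
  have hax : ¬ r a x := by
    intro hax
    obtain rfl | hne := eq_or_ne a x
    · exact lt_irrefl _ ha
    · exact (hrad2 a x y ⟨hax, hne⟩ hyx).not_gt ha
  refine (le_infDist ⟨a, hrefl a⟩).2 fun z (hz : r a z) => ?_
  obtain rfl | hne := eq_or_ne a z
  · exact le_rfl
  · exact hrad1 x a z hax ⟨hz, hne⟩

theorem exists_infDist_lt_min_of_rel (hrefl : ∀ x, r x x)
    (hantisymm : ∀ x y, r x y → r y x → x = y)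
    (hrad1 : ∀ x y z, ¬ r y x → r y z ∧ y ≠ z → dist x y ≤ dist x z)
    (hrad2 : ∀ x y z, r x y ∧ x ≠ y → ¬ r z y → dist y z ≤ dist x z)
    {ι : Type*} {a : ι → X} (ha : DenseRange a) {ε : ℝ} (hε : 0 < ε)
    {x y : X} (hxy : r x y ∧ x ≠ y) :
    ∃ n, infDist y {z | r (a n) z} < min (infDist x {z | r (a n) z}) ε := by
  have hd : 0 < dist x y := dist_pos.2 hxy.2
  have hyx : ¬ r y x := fun h => hxy.2 (hantisymm x y hxy.1 h)
  obtain ⟨n, hn⟩ := ha.exists_dist_lt y (lt_min (half_pos hd) hε)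
  have hny : dist (a n) y < dist x y / 2 := dist_comm y (a n) ▸ hn.trans_le (min_le_left _ _)
  have hy : infDist y {z | r (a n) z} < min (dist x y / 2) ε :=
    (infDist_le_dist_of_mem (hrefl (a n))).trans_lt hn
  have hx : dist x (a n) ≤ infDist x {z | r (a n) z} :=
    dist_le_infDist_of_dist_lt hrefl hrad1 hrad2 hyx (hny.trans (half_lt_self hd))
  have htri : dist x y ≤ dist x (a n) + dist (a n) y := dist_triangle _ _ _
  refine ⟨n, lt_min ?_ (hy.trans_le (min_le_right _ _))⟩
  have := min_le_left (dist x y / 2) ε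
  linarith

end Radial

section GeometricSum

variable {X : Type*} {f : ℕ → X → ℝ}

theorem summable_geometric_two_mul_of_mem_Icc (hf : ∀ n x, f n x ∈ Set.Icc (0 : ℝ) 1) (x : X) :
    Summable fun n => (1 / 2 : ℝ) ^ n * f n x :=
  .of_nonneg_of_le (fun n => mul_nonneg (by positivity) (hf n x).1)
    (fun n => mul_le_of_le_one_right (by positivity) (hf n x).2) summable_geometric_two

theorem tsum_geometric_two_mul_lt_tsum (hf : ∀ n x, f n x ∈ Set.Icc (0 : ℝ) 1) {x y : X}
    (hle : ∀ n, f n y ≤ f n x) {n : ℕ} (hlt : f n y < f n x) :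
    ∑' n, (1 / 2 : ℝ) ^ n * f n y < ∑' n, (1 / 2 : ℝ) ^ n * f n x :=
  Summable.tsum_lt_tsum_of_nonneg (fun m => mul_nonneg (by positivity) (hf m y).1)
    (fun m => mul_le_mul_of_nonneg_left (hle m) (by positivity)) (by gcongr)
    (summable_geometric_two_mul_of_mem_Icc hf x)

theorem lipschitzWith_two_tsum_geometric_two_mul [PseudoMetricSpace X]
    (hlip : ∀ n, LipschitzWith 1 (f n)) (hsum : ∀ x, Summable fun n => (1 / 2 : ℝ) ^ n * f n x) :
    LipschitzWith 2 fun x => ∑' n, (1 / 2 : ℝ) ^ n * f n x := by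
  refine LipschitzWith.of_dist_le_mul fun x y => ?_
  rw [Real.dist_eq, ← (hsum x).tsum_sub (hsum y)]
  refine tsum_of_norm_bounded (f := fun n => (1 / 2 : ℝ) ^ n * f n x - (1 / 2 : ℝ) ^ n * f n y)
    (hasSum_geometric_two.mul_right (dist x y)) fun n => ?_
  have hn : dist (f n x) (f n y) ≤ dist x y := by simpa using (hlip n).dist_le_mul x y
  rw [← mul_sub, norm_mul, Real.norm_of_nonneg (by positivity), ← dist_eq_norm]
  gcongr

end GeometricSum

/-- **Theorem 8.** On a radial partially ordered σ-compact metric space there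
is a strictly increasing Lipschitz function `F : X → ℝ` (i.e. `F x > F y`
whenever `x ≻ y`). Here `r x y` means `x ≽ y`. -/
theorem exists_strictly_increasing_lipschitz_of_sigmaCompact
    {X : Type*} [MetricSpace X] [SigmaCompactSpace X] (r : X → X → Prop)
    (hrefl : ∀ x, r x x)
    (htrans : ∀ x y z, r x y → r y z → r x z)
    (hantisymm : ∀ x y, r x y → r y x → x = y)
    (hrad1 : ∀ x y z, ¬ r y x → r y z ∧ y ≠ z → dist x y ≤ dist x z)
    (hrad2 : ∀ x y z, r x y ∧ x ≠ y → ¬ r z y → dist y z ≤ dist x z) :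
    ∃ F : X → ℝ, ∃ K : ℝ, 0 ≤ K ∧
      (∀ x y, |F x - F y| ≤ K * dist x y) ∧
      ∀ x y, r x y ∧ x ≠ y → F y < F x := by
  rcases isEmpty_or_nonempty X with hX | hX
  · exact ⟨0, 0, le_rfl, fun x => hX.elim x, fun x => hX.elim x⟩
  set a := TopologicalSpace.denseSeq X
  set f : ℕ → X → ℝ := fun n x => min (infDist x {z | r (a n) z}) 1
  have hf : ∀ n x, f n x ∈ Set.Icc (0 : ℝ) 1 := fun n x => ⟨le_min infDist_nonneg zero_le_one,
    min_le_right _ _⟩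
  have hmono : ∀ n x y, r x y ∧ x ≠ y → f n y ≤ f n x := fun n x y hxy =>
    min_le_min_right 1 <| infDist_le_infDist_of_rel (fun z hz w => htrans _ z w hz) hrad2 hxy
  refine ⟨fun x => ∑' n, (1 / 2 : ℝ) ^ n * f n x, 2, zero_le_two, fun x y => ?_, ?_⟩
  · simpa [Real.dist_eq] using
      (lipschitzWith_two_tsum_geometric_two_mul (fun n => (lipschitz_infDist_pt _).min_const 1)
        (summable_geometric_two_mul_of_mem_Icc hf)).dist_le_mul x y
  · intro x y hxy
    obtain ⟨n, hn⟩ := exists_infDist_lt_min_of_rel hrefl hantisymm hrad1 hrad2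
      (TopologicalSpace.denseRange_denseSeq X) zero_lt_one hxy
    have hfn : f n y < f n x := (min_eq_left (hn.le.trans (min_le_right _ _))).trans_lt hn
    exact tsum_geometric_two_mul_lt_tsum hf (fun m => hmono m x y hxy) hfn
end

section
/- Let (X, d, ≽) be a radially convex linearly ordered metric space (i.e., ≽ is a total order) such that (X,d) is σ-compact. Then there exists a Lipschitz function F : X → ℝ such that for all x,y ∈ X, x ≽ y if and only if F(x) ≥ F(y). -/
/-!
Every point `q` gives the signed distance `x ↦ ±dist x q`, with sign `+` iff `x ≽ q`. Radial
convexity makes it monotone and `2`-Lipschitz, and it separates `x ≻ y` as soon as `q` is close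
enough to `y`. A σ-compact metric space is separable, so the signed distances to a dense sequence,
summed with weights `2⁻ⁿ`, give a Lipschitz function that is strictly monotone.
-/

open scoped NNReal

/-- The series is taken relative to a base point `x₀`, so that it converges without any
boundedness assumption on the `f n`. -/
noncomputable def dyadicSum {X : Type*} (f : ℕ → X → ℝ) (x₀ x : X) : ℝ :=
  ∑' n, (1 / 2 : ℝ) ^ n * (f n x - f n x₀)

section DyadicSum

variable {X : Type*} [PseudoMetricSpace X] {f : ℕ → X → ℝ} {K : ℝ≥0}

lemma norm_half_pow_mul_sub_le (hf : ∀ n, LipschitzWith K (f n)) (n : ℕ) (x y : X) :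
    ‖(1 / 2 : ℝ) ^ n * (f n x - f n y)‖ ≤ (1 / 2 : ℝ) ^ n * (K * dist x y) := by
  rw [norm_mul, norm_pow, Real.norm_of_nonneg (by norm_num : (0 : ℝ) ≤ 1 / 2), Real.norm_eq_abs,
    ← Real.dist_eq]
  exact mul_le_mul_of_nonneg_left ((hf n).dist_le_mul x y) (by positivity)

lemma summable_half_pow_mul_sub (hf : ∀ n, LipschitzWith K (f n)) (x y : X) :
    Summable fun n ↦ (1 / 2 : ℝ) ^ n * (f n x - f n y) :=
  .of_norm_bounded (summable_geometric_two.mul_right _) (norm_half_pow_mul_sub_le hf · x y)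

lemma dyadicSum_sub_dyadicSum (hf : ∀ n, LipschitzWith K (f n)) (x₀ x y : X) :
    dyadicSum f x₀ x - dyadicSum f x₀ y = ∑' n, (1 / 2 : ℝ) ^ n * (f n x - f n y) := by
  rw [dyadicSum, dyadicSum, ← (summable_half_pow_mul_sub hf x x₀).tsum_sub
    (summable_half_pow_mul_sub hf y x₀)]
  congr 1 with n
  ring

lemma lipschitzWith_dyadicSum (hf : ∀ n, LipschitzWith K (f n)) (x₀ : X) :
    LipschitzWith (2 * K) (dyadicSum f x₀) := by
  refine .of_dist_le_mul fun x y ↦ ?_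
  rw [Real.dist_eq, ← Real.norm_eq_abs, dyadicSum_sub_dyadicSum hf, NNReal.coe_mul,
    NNReal.coe_two, mul_assoc]
  exact tsum_of_norm_bounded (hasSum_geometric_two.mul_right _)
    (norm_half_pow_mul_sub_le hf · x y)

lemma dyadicSum_le_dyadicSum (hf : ∀ n, LipschitzWith K (f n)) {x y : X}
    (hle : ∀ n, f n y ≤ f n x) (x₀ : X) : dyadicSum f x₀ y ≤ dyadicSum f x₀ x :=
  (summable_half_pow_mul_sub hf y x₀).tsum_le_tsum
    (fun n ↦ by gcongr; exact hle n) (summable_half_pow_mul_sub hf x x₀)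

lemma dyadicSum_lt_dyadicSum (hf : ∀ n, LipschitzWith K (f n)) {x y : X}
    (hle : ∀ n, f n y ≤ f n x) {m : ℕ} (hlt : f m y < f m x) (x₀ : X) :
    dyadicSum f x₀ y < dyadicSum f x₀ x :=
  (summable_half_pow_mul_sub hf y x₀).tsum_lt_tsum (fun n ↦ by gcongr; exact hle n)
    (by gcongr) (summable_half_pow_mul_sub hf x x₀)

end DyadicSum

/-- Radial convexity of `(X, dist, r)`, where `r x y` reads `x ≽ y` and `x ≻ y` is
`r x y ∧ x ≠ y`. -/
def RadiallyConvex {X : Type*} [PseudoMetricSpace X] (r : X → X → Prop) : Prop :=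
  ∀ x y z, r x y ∧ x ≠ y → r y z ∧ y ≠ z → max (dist x y) (dist y z) ≤ dist x z

open Classical in
noncomputable def orderedSignedDist {X : Type*} [PseudoMetricSpace X] (r : X → X → Prop)
    (q x : X) : ℝ :=
  if r x q then dist x q else -dist x q

section OrderedSignedDist

variable {X : Type*} [PseudoMetricSpace X] {r : X → X → Prop}

lemma RadiallyConvex.max_dist_le (hrc : RadiallyConvex r) {x y z : X} (hxy : r x y)
    (hyz : r y z) : max (dist x y) (dist y z) ≤ dist x z := by
  rcases eq_or_ne x y with rfl | hxy'
  · simp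
  rcases eq_or_ne y z with rfl | hyz'
  · simp
  exact hrc x y z ⟨hxy, hxy'⟩ ⟨hyz, hyz'⟩

lemma orderedSignedDist_le_dist (q x : X) : orderedSignedDist r q x ≤ dist x q := by
  unfold orderedSignedDist
  split_ifs <;> linarith [dist_nonneg (x := x) (y := q)]

lemma orderedSignedDist_mono (htrans : ∀ x y z, r x y → r y z → r x z)
    (htotal : ∀ x y, r x y ∨ r y x) (hrc : RadiallyConvex r) (q : X) {x y : X}
    (hxy : r x y) : orderedSignedDist r q y ≤ orderedSignedDist r q x := by
  unfold orderedSignedDist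
  split_ifs with hyq hxq hxq
  · exact (hrc.max_dist_le hxy hyq).trans' (le_max_right _ _)
  · exact absurd (htrans x y q hxy hyq) hxq
  · linarith [dist_nonneg (x := x) (y := q), dist_nonneg (x := y) (y := q)]
  · have hqx : r q x := (htotal q x).resolve_right hxq
    rw [neg_le_neg_iff, dist_comm x, dist_comm y]
    exact (hrc.max_dist_le hqx hxy).trans' (le_max_left _ _)

lemma lipschitzWith_orderedSignedDist (htotal : ∀ x y, r x y ∨ r y x) (hrc : RadiallyConvex r)
    (q : X) : LipschitzWith 2 (orderedSignedDist r q) := by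
  -- if `x ≽ q ≽ y`, radial convexity bounds both `dist x q` and `dist q y` by `dist x y`
  have across : ∀ {x y}, r x q → ¬ r y q → dist x q + dist y q ≤ 2 * dist x y := by
    intro x y hxq hyq
    have h := hrc.max_dist_le hxq ((htotal q y).resolve_right hyq)
    rw [max_le_iff, dist_comm q] at h
    linarith
  refine .of_dist_le_mul fun x y ↦ ?_
  have h := abs_le.mp (abs_dist_sub_le x y q)
  rw [Real.dist_eq, NNReal.coe_two, abs_sub_le_iff, orderedSignedDist, orderedSignedDist]
  split_ifs with hxq hyq hyq <;> constructor
  all_goals first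
    | linarith [dist_nonneg (x := x) (y := y), dist_nonneg (x := x) (y := q),
        dist_nonneg (x := y) (y := q)]
    | linarith [across hxq hyq]
    | linarith [across hyq hxq, dist_comm x y]

lemma orderedSignedDist_lt_orderedSignedDist (htotal : ∀ x y, r x y ∨ r y x)
    (hrc : RadiallyConvex r) {x y q : X} (hxy : r x y) (hqy : dist q y < dist x y / 2) :
    orderedSignedDist r q y < orderedSignedDist r q x := by
  have hxq : r x q := by
    by_contra hxq
    have := hrc.max_dist_le ((htotal q x).resolve_right hxq) hxy
    linarith [le_max_right (dist q x) (dist x y), dist_nonneg (x := q) (y := y)]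
  have hy := orderedSignedDist_le_dist (r := r) q y
  have hx : orderedSignedDist r q x = dist x q := if_pos hxq
  linarith [dist_triangle x q y, dist_comm q y, dist_comm y q]

end OrderedSignedDist

theorem exists_lipschitz_representation_of_radiallyConvex_loset_general
    {X : Type*} [MetricSpace X] [SigmaCompactSpace X] (r : X → X → Prop)
    (htrans : ∀ x y z, r x y → r y z → r x z)
    (htotal : ∀ x y, r x y ∨ r y x)
    (hrc : ∀ x y z, r x y ∧ x ≠ y → r y z ∧ y ≠ z →
      max (dist x y) (dist y z) ≤ dist x z) :
    ∃ F : X → ℝ, ∃ K : ℝ, 0 ≤ K ∧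
      (∀ x y, |F x - F y| ≤ K * dist x y) ∧
      ∀ x y, r x y ↔ F y ≤ F x := by
  rcases isEmpty_or_nonempty X with hX | hX
  · exact ⟨0, 0, le_rfl, isEmptyElim, isEmptyElim⟩
  set u := TopologicalSpace.denseSeq X
  have hlip n : LipschitzWith 2 (orderedSignedDist r (u n)) :=
    lipschitzWith_orderedSignedDist htotal hrc _
  have hmono {x y} (hxy : r x y) n : orderedSignedDist r (u n) y ≤ orderedSignedDist r (u n) x :=
    orderedSignedDist_mono htrans htotal hrc _ hxy
  set F := dyadicSum (fun n ↦ orderedSignedDist r (u n)) (u 0)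
  have hstrict {x y} (hxy : r x y) (hne : x ≠ y) : F y < F x := by
    obtain ⟨n, hn⟩ := Metric.denseRange_iff.mp (TopologicalSpace.denseRange_denseSeq X) y
      (dist x y / 2) (by linarith [dist_pos.mpr hne])
    exact dyadicSum_lt_dyadicSum hlip (hmono hxy)
      (orderedSignedDist_lt_orderedSignedDist htotal hrc hxy (by rwa [dist_comm])) _
  refine ⟨F, _, NNReal.coe_nonneg (2 * 2), fun x y ↦ ?_, fun x y ↦ ⟨fun hxy ↦
    dyadicSum_le_dyadicSum hlip (hmono hxy) _, fun hFyx ↦ ?_⟩⟩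
  · simpa only [Real.dist_eq] using (lipschitzWith_dyadicSum hlip (u 0)).dist_le_mul x y
  · by_contra hxy
    have hyx : r y x := (htotal x y).resolve_left hxy
    have hne : y ≠ x := by rintro rfl; exact hxy hyx
    exact (hstrict hyx hne).not_ge hFyx

/-- **Corollary 9.** A radially convex linear order on a σ-compact metric
space is represented by a Lipschitz function. Here `r x y` means `x ≽ y`. -/
theorem exists_lipschitz_representation_of_radiallyConvex_loset
    {X : Type*} [MetricSpace X] [SigmaCompactSpace X] (r : X → X → Prop)
    (hrefl : ∀ x, r x x)
    (htrans : ∀ x y z, r x y → r y z → r x z)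
    (hantisymm : ∀ x y, r x y → r y x → x = y)
    (htotal : ∀ x y, r x y ∨ r y x)
    (hrc : ∀ x y z, r x y ∧ x ≠ y → r y z ∧ y ≠ z →
      max (dist x y) (dist y z) ≤ dist x z) :
    ∃ F : X → ℝ, ∃ K : ℝ, 0 ≤ K ∧
      (∀ x y, |F x - F y| ≤ K * dist x y) ∧
      ∀ x y, r x y ↔ F y ≤ F x :=
  exists_lipschitz_representation_of_radiallyConvex_loset_general r htrans htotal hrc
end

section
/- Let (X, d, ≽) be a radial partially ordered metric space and S a nonempty subset of X. Then for every ≽-increasing, uniformly continuous function f : S → ℝ that is Lipschitz for large distances, there exists a ≽-increasing, uniformly continuous function F : X → ℝ with F restricted to S equal to f. -/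
/-!
Uniform continuity together with the Lipschitz bound for large distances gives, for every
`ε > 0`, some `K` with `|f a - f b| ≤ ε + K d(a, b)` on `S`. The lower envelope `ω` of these
affine functions is a monotone, subadditive modulus of continuity of `f`, continuous at `0`.

Replace the distance by the quasi-distance `e(x, s) = 0` if `x ≽ s` and `e(x, s) = d(x, s)`
otherwise: radiality gives that `e(·, s)` decreases as `x` moves up the order and that
`e(x', s) ≤ d(x, x') + e(x, s)`. The McShane-type extension `F x = sup_{s ∈ S} f s - ω (e x s)`
is then increasing, agrees with `f` on `S` (because `f s - f s' ≤ ω (e s' s)` there), and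
satisfies `|F x - F x'| ≤ ω (d(x, x'))`.
-/

open Filter Topology Set
open scoped NNReal

structure IsSubadditiveModulus (ω : ℝ≥0 → ℝ≥0) : Prop where
  monotone : Monotone ω
  add_le : ∀ a b, ω (a + b) ≤ ω a + ω b
  tendsto_zero : Tendsto ω (𝓝 0) (𝓝 0)

namespace IsSubadditiveModulus

variable {ω : ℝ≥0 → ℝ≥0}

theorem map_zero (hω : IsSubadditiveModulus ω) : ω 0 = 0 :=
  tendsto_nhds_unique (tendsto_pure_nhds ω 0) (hω.tendsto_zero.mono_left (pure_le_nhds 0))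

theorem apply_le_add {a b c : ℝ≥0} (hω : IsSubadditiveModulus ω) (h : a ≤ b + c) :
    (ω a : ℝ) ≤ ω b + ω c := by
  exact_mod_cast (hω.monotone h).trans (hω.add_le b c)

end IsSubadditiveModulus

theorem uniformContinuous_of_abs_sub_le {X : Type*} [PseudoMetricSpace X] {F : X → ℝ}
    {ω : ℝ≥0 → ℝ≥0} (hω : Tendsto ω (𝓝 0) (𝓝 0)) (h : ∀ x y, |F x - F y| ≤ ω (nndist x y)) :
    UniformContinuous F := by
  refine Metric.uniformContinuous_iff.2 fun ε hε => ?_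
  obtain ⟨δ, hδ, hδω⟩ := Metric.tendsto_nhds_nhds.1 hω ε hε
  refine ⟨δ, hδ, fun {x y} hxy => ?_⟩
  have hωxy : (ω (nndist x y) : ℝ) < ε := by
    simpa [NNReal.dist_eq] using hδω (x := nndist x y) (by simpa [NNReal.dist_eq] using hxy)
  exact Real.dist_eq (F x) (F y) ▸ (h x y).trans_lt hωxy

section AffineInf

variable {P : Set (ℝ≥0 × ℝ≥0)}

noncomputable def affineInf (P : Set (ℝ≥0 × ℝ≥0)) (t : ℝ≥0) : ℝ≥0 :=
  ⨅ p : P, p.1.1 + p.1.2 * t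

theorem affineInf_le {p : ℝ≥0 × ℝ≥0} (hp : p ∈ P) (t : ℝ≥0) : affineInf P t ≤ p.1 + p.2 * t :=
  ciInf_le (OrderBot.bddBelow _) (⟨p, hp⟩ : P)

theorem le_affineInf (hP : P.Nonempty) {a : ℝ} {t : ℝ≥0}
    (h : ∀ p ∈ P, a ≤ p.1 + p.2 * t) : a ≤ affineInf P t := by
  have := hP.to_subtype
  rw [affineInf, NNReal.coe_iInf]
  exact le_ciInf fun p => by exact_mod_cast h p p.2

theorem affineInf_mono : Monotone (affineInf P) := fun _ _ hst =>
  ciInf_mono (OrderBot.bddBelow _) fun _ => by gcongr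

theorem affineInf_add_le (hP : P.Nonempty) (a b : ℝ≥0) :
    affineInf P (a + b) ≤ affineInf P a + affineInf P b := by
  have := hP.to_subtype
  refine NNReal.le_iInf_add_iInf fun p q => ?_
  -- the affine function with the smaller slope already bounds `affineInf P (a + b)`
  rcases le_total p.1.2 q.1.2 with hpq | hqp
  · calc affineInf P (a + b) ≤ p.1.1 + p.1.2 * (a + b) := affineInf_le p.2 _
      _ = p.1.1 + p.1.2 * a + p.1.2 * b := by ring
      _ ≤ p.1.1 + p.1.2 * a + (q.1.1 + q.1.2 * b) := by gcongr; exact le_add_left (by gcongr)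
  · calc affineInf P (a + b) ≤ q.1.1 + q.1.2 * (a + b) := affineInf_le q.2 _
      _ = q.1.2 * a + (q.1.1 + q.1.2 * b) := by ring
      _ ≤ p.1.1 + p.1.2 * a + (q.1.1 + q.1.2 * b) := by gcongr; exact le_add_left (by gcongr)

theorem tendsto_affineInf (hP : ∀ ε > 0, ∃ K, (ε, K) ∈ P) :
    Tendsto (affineInf P) (𝓝 0) (𝓝 0) := by
  refine tendsto_order.2 ⟨fun a ha => absurd ha (not_lt_zero (a := a)), fun a ha => ?_⟩
  obtain ⟨K, hK⟩ := hP (a / 2) (half_pos ha)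
  have hline : Tendsto (fun t => a / 2 + K * t) (𝓝 0) (𝓝 (a / 2)) :=
    (continuous_const.add (continuous_const.mul continuous_id)).tendsto' 0 _ (by simp)
  filter_upwards [hline.eventually (gt_mem_nhds (half_lt_self ha))] with t ht
  exact (affineInf_le hK t).trans_lt ht

theorem isSubadditiveModulus_affineInf (hP : ∀ ε > 0, ∃ K, (ε, K) ∈ P) :
    IsSubadditiveModulus (affineInf P) :=
  have hP₀ : P.Nonempty := ⟨_, (hP 1 one_pos).choose_spec⟩
  ⟨affineInf_mono, affineInf_add_le hP₀, tendsto_affineInf hP⟩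

end AffineInf

section ModulusOfContinuity

variable {X : Type*} [PseudoMetricSpace X] {S : Set X} {f : X → ℝ}

def affineBounds (S : Set X) (f : X → ℝ) : Set (ℝ≥0 × ℝ≥0) :=
  {p | ∀ a ∈ S, ∀ b ∈ S, |f a - f b| ≤ p.1 + p.2 * dist a b}

theorem exists_mem_affineBounds (huc : UniformContinuousOn f S)
    (hlld : ∀ δ : ℝ, 0 < δ → ∃ K : ℝ, 0 < K ∧
      ∀ x ∈ S, ∀ y ∈ S, δ ≤ dist x y → |f x - f y| ≤ K * dist x y)
    {ε : ℝ≥0} (hε : 0 < ε) : ∃ K, (ε, K) ∈ affineBounds S f := by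
  obtain ⟨δ, hδ, hnear⟩ := Metric.uniformContinuousOn_iff.1 huc ε hε
  obtain ⟨K, hK, hfar⟩ := hlld δ hδ
  refine ⟨⟨K, hK.le⟩, fun a ha b hb => ?_⟩
  show |f a - f b| ≤ ε + K * dist a b
  have hKd : 0 ≤ K * dist a b := mul_nonneg hK.le dist_nonneg
  rcases le_or_gt δ (dist a b) with hab | hab
  · linarith [hfar a ha b hb hab, ε.2]
  · linarith [Real.dist_eq (f a) (f b) ▸ hnear a ha b hb hab]

theorem exists_subadditiveModulus_of_uniformContinuousOn (huc : UniformContinuousOn f S)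
    (hlld : ∀ δ : ℝ, 0 < δ → ∃ K : ℝ, 0 < K ∧
      ∀ x ∈ S, ∀ y ∈ S, δ ≤ dist x y → |f x - f y| ≤ K * dist x y) :
    ∃ ω, IsSubadditiveModulus ω ∧ ∀ a ∈ S, ∀ b ∈ S, |f a - f b| ≤ ω (nndist a b) := by
  have hP : ∀ ε > 0, ∃ K, (ε, K) ∈ affineBounds S f := fun ε hε =>
    exists_mem_affineBounds huc hlld hε
  refine ⟨affineInf (affineBounds S f), isSubadditiveModulus_affineInf hP,
    fun a ha b hb => le_affineInf ⟨_, (hP 1 one_pos).choose_spec⟩ fun p hp => ?_⟩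
  simpa using hp a ha b hb

end ModulusOfContinuity

section OrderDist

variable {X : Type*} [PseudoMetricSpace X] {r : X → X → Prop} {x y s : X}

open Classical in
noncomputable def orderDist (r : X → X → Prop) (x s : X) : ℝ≥0 :=
  if r x s then 0 else nndist x s

theorem orderDist_of_rel (h : r x s) : orderDist r x s = 0 := if_pos h

theorem orderDist_of_not_rel (h : ¬ r x s) : orderDist r x s = nndist x s := if_neg h

theorem orderDist_le_of_rel (htrans : ∀ x y z, r x y → r y z → r x z)
    (hrad1 : ∀ x y z, ¬ r y x → r y z ∧ y ≠ z → dist x y ≤ dist x z) (hxy : r x y) :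
    orderDist r x s ≤ orderDist r y s := by
  rcases eq_or_ne x y with rfl | hne
  · rfl
  by_cases hxs : r x s
  · simp [orderDist_of_rel hxs]
  have hys : ¬ r y s := fun hys => hxs (htrans x y s hxy hys)
  rw [orderDist_of_not_rel hxs, orderDist_of_not_rel hys, ← NNReal.coe_le_coe, coe_nndist,
    coe_nndist, dist_comm x, dist_comm y]
  exact hrad1 s x y hxs ⟨hxy, hne⟩

theorem orderDist_le_nndist_add (hrad2 : ∀ x y z, r x y ∧ x ≠ y → ¬ r z y → dist y z ≤ dist x z)
    (x x' s : X) : orderDist r x' s ≤ nndist x x' + orderDist r x s := by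
  by_cases hx's : r x' s
  · simp [orderDist_of_rel hx's]
  rw [orderDist_of_not_rel hx's]
  by_cases hxs : r x s
  · rw [orderDist_of_rel hxs, add_zero, ← NNReal.coe_le_coe, coe_nndist, coe_nndist]
    rcases eq_or_ne x s with rfl | hne
    · exact (dist_comm _ _).le
    · exact dist_comm s x' ▸ hrad2 x s x' ⟨hxs, hne⟩ hx's
  · rw [orderDist_of_not_rel hxs]
    exact nndist_comm x x' ▸ nndist_triangle x' x s

end OrderDist

section SupConvolution

variable {X : Type*} {e : X → X → ℝ≥0} {ω : ℝ≥0 → ℝ≥0} {S : Set X} {f : X → ℝ} {x y : X}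

noncomputable def supConvolution (e : X → X → ℝ≥0) (ω : ℝ≥0 → ℝ≥0) (S : Set X) (f : X → ℝ)
    (x : X) : ℝ :=
  ⨆ s : S, f s - ω (e x s)

theorem supConvolution_le (hS : S.Nonempty) {a : ℝ} (h : ∀ s ∈ S, f s - ω (e x s) ≤ a) :
    supConvolution e ω S f x ≤ a :=
  have := hS.to_subtype
  ciSup_le fun s => h s s.2

variable [PseudoMetricSpace X]

theorem bddAbove_supConvolution_range (hS : S.Nonempty) (hω : IsSubadditiveModulus ω)
    (he : ∀ x x' s, e x' s ≤ nndist x x' + e x s)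
    (hf : ∀ s ∈ S, ∀ s' ∈ S, f s - f s' ≤ ω (e s' s)) (x : X) :
    BddAbove (range fun s : S => f s - ω (e x s)) := by
  obtain ⟨s₀, hs₀⟩ := hS
  refine ⟨f s₀ + ω (nndist x s₀), forall_mem_range.2 fun s => ?_⟩
  linarith [hf s s.2 s₀ hs₀, hω.apply_le_add (he x s₀ s)]

theorem le_supConvolution (hS : S.Nonempty) (hω : IsSubadditiveModulus ω)
    (he : ∀ x x' s, e x' s ≤ nndist x x' + e x s)
    (hf : ∀ s ∈ S, ∀ s' ∈ S, f s - f s' ≤ ω (e s' s)) {s : X} (hs : s ∈ S) :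
    f s - ω (e x s) ≤ supConvolution e ω S f x :=
  le_ciSup (bddAbove_supConvolution_range hS hω he hf x) (⟨s, hs⟩ : S)

theorem supConvolution_le_add (hS : S.Nonempty) (hω : IsSubadditiveModulus ω)
    (he : ∀ x x' s, e x' s ≤ nndist x x' + e x s)
    (hf : ∀ s ∈ S, ∀ s' ∈ S, f s - f s' ≤ ω (e s' s)) (x x' : X) :
    supConvolution e ω S f x ≤ supConvolution e ω S f x' + ω (nndist x x') :=
  supConvolution_le hS fun s hs => by
    linarith [le_supConvolution hS hω he hf (x := x') hs, hω.apply_le_add (he x x' s)]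

theorem uniformContinuous_supConvolution (hS : S.Nonempty) (hω : IsSubadditiveModulus ω)
    (he : ∀ x x' s, e x' s ≤ nndist x x' + e x s)
    (hf : ∀ s ∈ S, ∀ s' ∈ S, f s - f s' ≤ ω (e s' s)) :
    UniformContinuous (supConvolution e ω S f) := by
  refine uniformContinuous_of_abs_sub_le hω.tendsto_zero fun x x' => abs_sub_le_iff.2 ⟨?_, ?_⟩
  · linarith [supConvolution_le_add hS hω he hf x x']
  · linarith [nndist_comm x x' ▸ supConvolution_le_add hS hω he hf x' x]

theorem supConvolution_le_of_le (hS : S.Nonempty) (hω : IsSubadditiveModulus ω)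
    (he : ∀ x x' s, e x' s ≤ nndist x x' + e x s)
    (hf : ∀ s ∈ S, ∀ s' ∈ S, f s - f s' ≤ ω (e s' s)) (hxy : ∀ s ∈ S, e x s ≤ e y s) :
    supConvolution e ω S f y ≤ supConvolution e ω S f x :=
  supConvolution_le hS fun s hs => by
    have : (ω (e x s) : ℝ) ≤ ω (e y s) := by exact_mod_cast hω.monotone (hxy s hs)
    linarith [le_supConvolution hS hω he hf (x := x) hs]

theorem supConvolution_eqOn (hω : IsSubadditiveModulus ω)
    (he : ∀ x x' s, e x' s ≤ nndist x x' + e x s)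
    (hf : ∀ s ∈ S, ∀ s' ∈ S, f s - f s' ≤ ω (e s' s)) (he₀ : ∀ s ∈ S, e s s = 0) :
    EqOn (supConvolution e ω S f) f S := fun x hx => by
  refine le_antisymm (supConvolution_le ⟨x, hx⟩ fun s hs => ?_) ?_
  · linarith [hf s hs x hx]
  · simpa [he₀ x hx, hω.map_zero] using le_supConvolution ⟨x, hx⟩ hω he hf (x := x) hx

end SupConvolution

theorem exists_monotone_uniformlyContinuous_extension_general
    {X : Type*} [MetricSpace X] (r : X → X → Prop)
    (hrefl : ∀ x, r x x)
    (htrans : ∀ x y z, r x y → r y z → r x z)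
    (hrad1 : ∀ x y z, ¬ r y x → r y z ∧ y ≠ z → dist x y ≤ dist x z)
    (hrad2 : ∀ x y z, r x y ∧ x ≠ y → ¬ r z y → dist y z ≤ dist x z)
    (S : Set X) (hS : S.Nonempty) (f : X → ℝ)
    (hmono : ∀ x ∈ S, ∀ y ∈ S, r x y → f y ≤ f x)
    (huc : UniformContinuousOn f S)
    (hlld : ∀ δ : ℝ, 0 < δ → ∃ K : ℝ, 0 < K ∧
      ∀ x ∈ S, ∀ y ∈ S, δ ≤ dist x y → |f x - f y| ≤ K * dist x y) :
    ∃ F : X → ℝ, (∀ x y, r x y → F y ≤ F x) ∧ UniformContinuous F ∧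
      ∀ x ∈ S, F x = f x := by
  obtain ⟨ω, hω, hfω⟩ := exists_subadditiveModulus_of_uniformContinuousOn huc hlld
  have he := orderDist_le_nndist_add hrad2
  have hf : ∀ s ∈ S, ∀ s' ∈ S, f s - f s' ≤ ω (orderDist r s' s) := by
    intro s hs s' hs'
    by_cases h : r s' s
    · simpa [orderDist_of_rel h, hω.map_zero] using hmono s' hs' s hs h
    · rw [orderDist_of_not_rel h, nndist_comm]
      exact (le_abs_self _).trans (hfω s hs s' hs')
  exact ⟨supConvolution (orderDist r) ω S f,
    fun x y hxy => supConvolution_le_of_le hS hω he hf fun _ _ =>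
      orderDist_le_of_rel htrans hrad1 hxy,
    uniformContinuous_supConvolution hS hω he hf,
    supConvolution_eqOn hω he hf fun s _ => orderDist_of_rel (hrefl s)⟩

/-- **Theorem 13.** Let `(X, d, ≽)` be a radial metric poset and `S ⊆ X`
nonempty. Every `≽`-increasing, uniformly continuous `f : S → ℝ` that is
Lipschitz for large distances extends to an `≽`-increasing uniformly
continuous `F : X → ℝ`. Here `r x y` means `x ≽ y`. -/
theorem exists_monotone_uniformlyContinuous_extension
    {X : Type*} [MetricSpace X] (r : X → X → Prop)
    (hrefl : ∀ x, r x x)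
    (htrans : ∀ x y z, r x y → r y z → r x z)
    (hantisymm : ∀ x y, r x y → r y x → x = y)
    (hrad1 : ∀ x y z, ¬ r y x → r y z ∧ y ≠ z → dist x y ≤ dist x z)
    (hrad2 : ∀ x y z, r x y ∧ x ≠ y → ¬ r z y → dist y z ≤ dist x z)
    (S : Set X) (hS : S.Nonempty) (f : X → ℝ)
    (hmono : ∀ x ∈ S, ∀ y ∈ S, r x y → f y ≤ f x)
    (huc : UniformContinuousOn f S)
    (hlld : ∀ δ : ℝ, 0 < δ → ∃ K : ℝ, 0 < K ∧
      ∀ x ∈ S, ∀ y ∈ S, δ ≤ dist x y → |f x - f y| ≤ K * dist x y) :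
    ∃ F : X → ℝ, (∀ x y, r x y → F y ≤ F x) ∧ UniformContinuous F ∧
      ∀ x ∈ S, F x = f x :=
  exists_monotone_uniformlyContinuous_extension_general r hrefl htrans hrad1 hrad2 S hS f hmono huc
    hlld
end
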